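/- arXiv:2603.15201 — 3 statements merged into one kernel-verified Lean document; each statement's English description precedes it below -/
import Mathlib

section
/- Define, for x ≥ 0, f(x) = (Λ_h·Λ_v/(μ_v·(μ_v + x)))·∫_0^∞ β_h(a)·∫_0^a β_v(s)·exp(-∫_0^s ( Λ_v·β_v(ξ)·x/(μ_v·(μ_v + x)) + μ_h(ξ) )dξ)·exp(-∫_s^a (μ_h(ξ)+r_1(ξ)+δ(ξ))dξ) ds da. Then f is continuous and strictly decreasing on [0,∞), f(0) = R_0², and if R_0 > 1 there exists a unique x > 0 with f(x) = 1. -/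
/-!
Write `W`, `M`, `B` for the primitives of `μh + r1 + δ`, `μh`, `βv`. The integrand of `f x`
factors as `A a * ρ s * exp (-t B s)` with `A = βh e^{-W}`, `ρ = βv e^{W - M}` and
`t = Λv x / (μv (μv + x))`, so `f x = Λh Λv / (μv (μv + x)) * G t` where
`G t = ∫_{a>0} A a ∫₀ᵃ ρ s e^{-t B s} ds da` is nonincreasing in `t ≥ 0`. Because
`μh, μh + r1 + δ ≥ μ0`, the kernel satisfies `A u ρ s ≤ C e^{-μ0 u}` for `0 ≤ s ≤ u`, which
gives continuity of `G` by dominated convergence and justifies the substitution `u = s + σ`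
turning `G t` into an integral over the quadrant. At `t = 0` that integral is the one defining
`R0²`; for every `t` its integrand vanishes only where the irreducibility integrand does, so
`G > 0`. A strictly decreasing positive prefactor times a positive nonincreasing `G` is
strictly decreasing, `f x ≤ Λh Λv G(0) / (μv (μv + x))` eventually drops below `1`, and the
intermediate value theorem gives the root.
-/

open MeasureTheory Real Set Function Filter Topology

theorem intervalIntegrable_of_le_of_le {g : ℝ → ℝ} {m M : ℝ} (hg : Measurable g)
    (hm : ∀ x, m ≤ g x) (hM : ∀ x, g x ≤ M) (a b : ℝ) : IntervalIntegrable g volume a b :=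
  (intervalIntegrable_const (c := max |m| |M|)).mono_fun hg.aestronglyMeasurable <|
    ae_of_all _ fun x => by
      simp only [norm_eq_abs, abs_of_nonneg ((abs_nonneg m).trans (le_max_left _ _))]
      exact abs_le_max_abs_abs (hm x) (hM x)

theorem mul_sub_le_intervalIntegral {g : ℝ → ℝ} {m a b : ℝ} (hab : a ≤ b)
    (hg : IntervalIntegrable g volume a b) (hm : ∀ x, m ≤ g x) :
    m * (b - a) ≤ ∫ x in a..b, g x := by
  simpa [mul_comm] using
    intervalIntegral.integral_mono_on hab intervalIntegrable_const hg fun x _ => hm x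

theorem integral_Ioi_zero_comp_const_add (g : ℝ → ℝ) (s : ℝ) :
    ∫ σ in Ioi 0, g (s + σ) = ∫ u in Ioi s, g u := by
  simpa using (measurePreserving_add_left volume s).setIntegral_preimage_emb
    (measurableEmbedding_addLeft s) g (Ioi s)

theorem integral_pos_of_support_subset {α : Type*} [MeasurableSpace α] {μ : Measure α}
    {f g : α → ℝ} (hf : 0 ≤ f) (hg : 0 ≤ g) (hgi : Integrable g μ) (hfg : support f ⊆ support g)
    (hpos : 0 < ∫ x, f x ∂μ) : 0 < ∫ x, g x ∂μ := by
  rw [integral_pos_iff_support_of_nonneg hf (Integrable.of_integral_ne_zero hpos.ne')] at hpos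
  rw [integral_pos_iff_support_of_nonneg hg hgi]
  exact hpos.trans_le (measure_mono hfg)

theorem StrictAntiOn.mul_antitoneOn_of_nonneg {α : Type*} [Preorder α] {s : Set α}
    {f g : α → ℝ} (hf : StrictAntiOn f s) (hg : AntitoneOn g s) (hf0 : ∀ x ∈ s, 0 ≤ f x)
    (hg0 : ∀ x ∈ s, 0 < g x) : StrictAntiOn (fun x => f x * g x) s :=
  fun x hx y hy hxy => mul_lt_mul (hf hx hy hxy) (hg hx hy hxy.le) (hg0 y hy) (hf0 x hx)

theorem StrictAntiOn.existsUnique_pos_eq {f : ℝ → ℝ} {y x₁ : ℝ}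
    (hcont : ContinuousOn f (Ici 0)) (hanti : StrictAntiOn f (Ici 0)) (h0 : y < f 0)
    (hx₁ : 0 ≤ x₁) (h₁ : f x₁ < y) : ∃! x, 0 < x ∧ f x = y := by
  obtain ⟨x, hx, hfx⟩ := intermediate_value_Icc' hx₁ (hcont.mono Icc_subset_Ici_self)
    ⟨h₁.le, h0.le⟩
  have hx0 : 0 < x := hx.1.lt_of_ne (by rintro rfl; exact h0.ne' hfx)
  exact ⟨x, ⟨hx0, hfx⟩, fun z ⟨hz, hfz⟩ => hanti.injOn hz.le hx0.le (hfz.trans hfx.symm)⟩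

noncomputable abbrev quadrant : Measure (ℝ × ℝ) :=
  (volume.restrict (Ioi 0)).prod (volume.restrict (Ioi 0))

theorem integrable_quadrant_of_abs_le_exp {g : ℝ × ℝ → ℝ} (hg : Measurable g) {C c : ℝ}
    (hc : 0 < c) (hle : ∀ x y, 0 < x → 0 < y → |g (x, y)| ≤ C * exp (-(c * x)) * exp (-(c * y))) :
    Integrable g quadrant := by
  have hexp : IntegrableOn (fun x => exp (-(c * x))) (Ioi 0) := by
    simpa only [neg_mul] using exp_neg_integrableOn_Ioi 0 hc
  refine Integrable.mono' ((hexp.const_mul C).mul_prod hexp) hg.aestronglyMeasurable ?_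
  rw [quadrant, Measure.prod_restrict, ae_restrict_iff' (measurableSet_Ioi.prod measurableSet_Ioi)]
  exact ae_of_all _ fun p hp => hle p.1 p.2 hp.1 hp.2

section Shear

variable {F : ℝ → ℝ → ℝ} {C c : ℝ}

theorem integrable_quadrant_shear (hF : Measurable (uncurry F)) (hc : 0 < c)
    (hle : ∀ s u, 0 < s → s < u → |F s u| ≤ C * exp (-(c * u))) :
    Integrable (fun p : ℝ × ℝ => F p.1 (p.1 + p.2)) quadrant :=
  integrable_quadrant_of_abs_le_exp
    (hF.comp (measurable_fst.prodMk (measurable_fst.add measurable_snd))) hc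
    fun x y hx hy => (hle x (x + y) hx (by linarith)).trans_eq <| by
      rw [mul_assoc, ← exp_add]; ring_nf

theorem integrable_quadrant_triangle (hF : Measurable (uncurry F)) (hc : 0 < c)
    (hle : ∀ s u, 0 < s → s < u → |F s u| ≤ C * exp (-(c * u))) :
    Integrable (fun p : ℝ × ℝ => if p.2 < p.1 then F p.2 p.1 else 0) quadrant := by
  have hC : 0 ≤ C :=
    nonneg_of_mul_nonneg_left ((abs_nonneg _).trans (hle 1 2 one_pos one_lt_two)) (exp_pos _)
  refine integrable_quadrant_of_abs_le_exp (C := C) (Measurable.ite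
    (measurableSet_lt measurable_snd measurable_fst) (hF.comp measurable_swap) measurable_const)
    (half_pos hc) fun u s hu hs => ?_
  split_ifs with h
  · refine (hle s u hs h).trans ?_
    rw [mul_assoc, ← exp_add]
    gcongr
    nlinarith
  · rw [abs_zero]
    positivity

theorem integral_Ioi_integral_Ioc_eq_integral_quadrant (hF : Measurable (uncurry F))
    (hc : 0 < c) (hle : ∀ s u, 0 < s → s < u → |F s u| ≤ C * exp (-(c * u))) :
    ∫ u in Ioi 0, ∫ s in Ioc 0 u, F s u = ∫ p, F p.1 (p.1 + p.2) ∂quadrant := by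
  calc ∫ u in Ioi 0, ∫ s in Ioc 0 u, F s u
      = ∫ u in Ioi 0, ∫ s in Ioi 0, if s < u then F s u else 0 := by
        refine setIntegral_congr_fun measurableSet_Ioi fun u _ => ?_
        rw [show (fun s => if s < u then F s u else 0) = (Iio u).indicator (F · u) from
            funext fun s => by simp [indicator], setIntegral_indicator measurableSet_Iio,
          Ioi_inter_Iio, integral_Ioc_eq_integral_Ioo]
    _ = ∫ s in Ioi 0, ∫ u in Ioi 0, if s < u then F s u else 0 :=
        integral_integral_swap (integrable_quadrant_triangle hF hc hle)
    _ = ∫ s in Ioi 0, ∫ σ in Ioi 0, F s (s + σ) := by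
        refine setIntegral_congr_fun measurableSet_Ioi fun s (hs : 0 < s) => ?_
        rw [integral_Ioi_zero_comp_const_add (F s),
          show (fun u => if s < u then F s u else 0) = (Ioi s).indicator (F s) from
            funext fun u => by simp [indicator], setIntegral_indicator measurableSet_Ioi,
          Ioi_inter_Ioi, sup_eq_right.2 hs.le]
    _ = ∫ p, F p.1 (p.1 + p.2) ∂quadrant :=
        (integral_prod _ (integrable_quadrant_shear hF hc hle)).symm

end Shear

theorem exp_neg_mul_le_one {t b : ℝ} (ht : 0 ≤ t) (hb : 0 ≤ b) : exp (-(t * b)) ≤ 1 :=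
  exp_le_one_iff.2 (neg_nonpos.2 (mul_nonneg ht hb))

/-- The `G` of the factorization `f x = Λh Λv / (μv (μv + x)) * G (Λv x / (μv (μv + x)))`. -/
noncomputable def nestedLaplace (A ρ B : ℝ → ℝ) (t : ℝ) : ℝ :=
  ∫ a in Ioi 0, A a * ∫ s in 0..a, ρ s * exp (-(t * B s))

structure IsDecayingKernel (A ρ B : ℝ → ℝ) (C c : ℝ) : Prop where
  measurable_A : Measurable A
  nonneg_A : ∀ a, 0 ≤ A a
  measurable_ρ : Measurable ρ
  nonneg_ρ : ∀ s, 0 ≤ ρ s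
  intervalIntegrable_ρ : ∀ a b, IntervalIntegrable ρ volume a b
  continuous_B : Continuous B
  nonneg_B : ∀ s, 0 ≤ s → 0 ≤ B s
  pos_c : 0 < c
  le_exp : ∀ s u, 0 ≤ s → s ≤ u → A u * ρ s ≤ C * exp (-(c * u))

namespace IsDecayingKernel

variable {A ρ B : ℝ → ℝ} {C c t : ℝ}

theorem continuous_integral_mul_exp_neg (h : IsDecayingKernel A ρ B C c) (t : ℝ) :
    Continuous fun a => ∫ s in 0..a, ρ s * exp (-(t * B s)) :=
  have := h.continuous_B
  intervalIntegral.continuous_primitive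
    (fun a b => (h.intervalIntegrable_ρ a b).mul_continuousOn (by fun_prop)) 0

theorem integral_mul_exp_neg_mem_Icc (h : IsDecayingKernel A ρ B C c) (ht : 0 ≤ t) {a : ℝ}
    (ha : 0 ≤ a) : ∫ s in 0..a, ρ s * exp (-(t * B s)) ∈ Icc 0 (∫ s in 0..a, ρ s) :=
  have := h.continuous_B
  ⟨intervalIntegral.integral_nonneg ha fun s _ => mul_nonneg (h.nonneg_ρ s) (exp_pos _).le,
    intervalIntegral.integral_mono_on ha
      ((h.intervalIntegrable_ρ 0 a).mul_continuousOn (by fun_prop)) (h.intervalIntegrable_ρ 0 a)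
      fun s hs => mul_le_of_le_one_right (h.nonneg_ρ s) (exp_neg_mul_le_one ht (h.nonneg_B s hs.1))⟩

theorem norm_integrand_le (h : IsDecayingKernel A ρ B C c) (ht : 0 ≤ t) {a : ℝ} (ha : 0 ≤ a) :
    ‖A a * ∫ s in 0..a, ρ s * exp (-(t * B s))‖ ≤ A a * ∫ s in 0..a, ρ s := by
  have hmem := h.integral_mul_exp_neg_mem_Icc ht ha
  rw [norm_of_nonneg (mul_nonneg (h.nonneg_A a) hmem.1)]
  exact mul_le_mul_of_nonneg_left hmem.2 (h.nonneg_A a)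

theorem integrableOn_dominant (h : IsDecayingKernel A ρ B C c) :
    IntegrableOn (fun a => A a * ∫ s in 0..a, ρ s) (Ioi 0) := by
  have hdecay : IntegrableOn (fun a => C * (a * exp (-(c * a)))) (Ioi 0) := by
    simpa [IntegrableOn, neg_mul] using (integrableOn_rpow_mul_exp_neg_mul_rpow (s := 1) (p := 1)
      (by norm_num) one_pos h.pos_c).const_mul C
  refine hdecay.mono' (h.measurable_A.mul (intervalIntegral.continuous_primitive
    h.intervalIntegrable_ρ 0).measurable).aestronglyMeasurable
    ((ae_restrict_iff' measurableSet_Ioi).2 (ae_of_all _ fun a (ha : 0 < a) => ?_))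
  have hP0 : 0 ≤ ∫ s in 0..a, ρ s :=
    intervalIntegral.integral_nonneg ha.le fun s _ => h.nonneg_ρ s
  rw [norm_of_nonneg (mul_nonneg (h.nonneg_A a) hP0), ← intervalIntegral.integral_const_mul]
  calc ∫ s in 0..a, A a * ρ s ≤ ∫ s in 0..a, C * exp (-(c * a)) :=
        intervalIntegral.integral_mono_on ha.le ((h.intervalIntegrable_ρ 0 a).const_mul _)
          intervalIntegrable_const fun s hs => h.le_exp s a hs.1 hs.2
    _ = C * (a * exp (-(c * a))) := by
        rw [intervalIntegral.integral_const, smul_eq_mul, sub_zero]; ring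

theorem integrableOn_integrand (h : IsDecayingKernel A ρ B C c) (ht : 0 ≤ t) :
    IntegrableOn (fun a => A a * ∫ s in 0..a, ρ s * exp (-(t * B s))) (Ioi 0) :=
  h.integrableOn_dominant.mono'
    (h.measurable_A.mul (h.continuous_integral_mul_exp_neg t).measurable).aestronglyMeasurable
    ((ae_restrict_iff' measurableSet_Ioi).2 (ae_of_all _ fun _ ha => h.norm_integrand_le ht ha.le))

theorem antitoneOn_nestedLaplace (h : IsDecayingKernel A ρ B C c) :
    AntitoneOn (nestedLaplace A ρ B) (Ici 0) := by
  have := h.continuous_B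
  intro t (ht : 0 ≤ t) t' (ht' : 0 ≤ t') htt'
  refine setIntegral_mono_on (h.integrableOn_integrand ht') (h.integrableOn_integrand ht)
    measurableSet_Ioi fun a (ha : 0 < a) => mul_le_mul_of_nonneg_left ?_ (h.nonneg_A a)
  refine intervalIntegral.integral_mono_on ha.le
    ((h.intervalIntegrable_ρ 0 a).mul_continuousOn (by fun_prop))
    ((h.intervalIntegrable_ρ 0 a).mul_continuousOn (by fun_prop)) fun s hs => ?_
  have := h.nonneg_ρ s
  have := h.nonneg_B s hs.1
  gcongr

theorem continuousOn_nestedLaplace (h : IsDecayingKernel A ρ B C c) :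
    ContinuousOn (nestedLaplace A ρ B) (Ici 0) := by
  have := h.continuous_B
  refine continuousOn_of_dominated (fun t _ => (h.measurable_A.mul
      (h.continuous_integral_mul_exp_neg t).measurable).aestronglyMeasurable)
    (fun t ht => (ae_restrict_iff' measurableSet_Ioi).2
      (ae_of_all _ fun a ha => h.norm_integrand_le ht (le_of_lt ha)))
    h.integrableOn_dominant
    ((ae_restrict_iff' measurableSet_Ioi).2 (ae_of_all _ fun a (ha : 0 < a) => ?_))
  refine continuousOn_const.mul fun t₀ _ =>
    intervalIntegral.continuousWithinAt_of_dominated_interval (bound := ρ)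
      (Eventually.of_forall fun t => (h.measurable_ρ.mul (by fun_prop)).aestronglyMeasurable)
      (eventually_nhdsWithin_of_forall fun t (ht : 0 ≤ t) => ae_of_all _ fun s hs => ?_)
      (h.intervalIntegrable_ρ 0 a)
      (ae_of_all _ fun s _ => (by fun_prop : Continuous _).continuousWithinAt)
  rw [uIoc_of_le ha.le] at hs
  rw [norm_of_nonneg (mul_nonneg (h.nonneg_ρ s) (exp_pos _).le)]
  exact mul_le_of_le_one_right (h.nonneg_ρ s) (exp_neg_mul_le_one ht (h.nonneg_B s hs.1.le))

theorem abs_kernel_le (h : IsDecayingKernel A ρ B C c) (ht : 0 ≤ t) {s u : ℝ} (hs : 0 < s)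
    (hsu : s < u) : |A u * (ρ s * exp (-(t * B s)))| ≤ C * exp (-(c * u)) := by
  rw [abs_of_nonneg (mul_nonneg (h.nonneg_A u) (mul_nonneg (h.nonneg_ρ s) (exp_pos _).le))]
  refine le_trans ?_ (h.le_exp s u hs.le hsu.le)
  exact mul_le_mul_of_nonneg_left (mul_le_of_le_one_right (h.nonneg_ρ s)
    (exp_neg_mul_le_one ht (h.nonneg_B s hs.le))) (h.nonneg_A u)

theorem measurable_kernel (h : IsDecayingKernel A ρ B C c) (t : ℝ) :
    Measurable (uncurry fun s u => A u * (ρ s * exp (-(t * B s)))) :=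
  have := h.measurable_A
  have := h.measurable_ρ
  have := h.continuous_B.measurable
  by fun_prop

theorem nestedLaplace_eq_integral_quadrant (h : IsDecayingKernel A ρ B C c) (ht : 0 ≤ t) :
    nestedLaplace A ρ B t = ∫ p, A (p.1 + p.2) * (ρ p.1 * exp (-(t * B p.1))) ∂quadrant := by
  rw [← integral_Ioi_integral_Ioc_eq_integral_quadrant (h.measurable_kernel t) h.pos_c
    fun s u hs hsu => h.abs_kernel_le ht hs hsu]
  refine setIntegral_congr_fun measurableSet_Ioi fun a (ha : 0 < a) => ?_
  rw [intervalIntegral.integral_of_le ha.le, ← integral_const_mul]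

theorem nestedLaplace_pos (h : IsDecayingKernel A ρ B C c) {H : ℝ → ℝ → ℝ}
    (hH0 : ∀ s u, 0 ≤ H s u) (hH : ∀ s u, H s u ≠ 0 → A u ≠ 0 ∧ ρ s ≠ 0)
    (hpos : 0 < ∫ p, H p.1 (p.1 + p.2) ∂quadrant) (ht : 0 ≤ t) :
    0 < nestedLaplace A ρ B t := by
  rw [h.nestedLaplace_eq_integral_quadrant ht]
  refine integral_pos_of_support_subset (f := fun p => H p.1 (p.1 + p.2)) (fun p => hH0 _ _)
    (fun p => mul_nonneg (h.nonneg_A _) (mul_nonneg (h.nonneg_ρ _) (exp_pos _).le))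
    (integrable_quadrant_shear (h.measurable_kernel t) h.pos_c
      fun s u hs hsu => h.abs_kernel_le ht hs hsu) (fun p hp => ?_) hpos
  obtain ⟨hA, hρ⟩ := hH _ _ hp
  exact mul_ne_zero hA (mul_ne_zero hρ (exp_pos _).ne')

theorem nestedLaplace_zero_eq_integral_Ioi_integral_Ioi (h : IsDecayingKernel A ρ B C c) :
    nestedLaplace A ρ B 0 = ∫ σ in Ioi 0, ∫ ξ in Ioi 0, A (ξ + σ) * ρ ξ := by
  have h₀ : IsDecayingKernel A ρ (fun _ => 0) C c :=
    { h with continuous_B := continuous_const, nonneg_B := fun _ _ => le_rfl }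
  have hB : nestedLaplace A ρ B 0 = nestedLaplace A ρ (fun _ => 0) 0 := by simp [nestedLaplace]
  rw [hB, h₀.nestedLaplace_eq_integral_quadrant le_rfl, integral_prod_symm]
  · simp
  · exact integrable_quadrant_shear (h₀.measurable_kernel 0) h.pos_c
      fun s u hs hsu => h₀.abs_kernel_le le_rfl hs hsu

end IsDecayingKernel

theorem monotoneOn_mul_div_mul_add {b c : ℝ} (hb : 0 < b) (hc : 0 ≤ c) :
    MonotoneOn (fun x => c * x / (b * (b + x))) (Ici 0) := by
  intro x (hx : 0 ≤ x) y (hy : 0 ≤ y) hxy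
  rw [div_le_div_iff₀ (by positivity) (by positivity)]
  nlinarith [mul_le_mul_of_nonneg_left hxy (by positivity : 0 ≤ c * b * b)]

theorem strictAntiOn_div_mul_add {a b : ℝ} (ha : 0 < a) (hb : 0 < b) :
    StrictAntiOn (fun x => a / (b * (b + x))) (Ici 0) := fun x (hx : 0 ≤ x) y _ hxy =>
  div_lt_div_of_pos_left ha (by positivity) (by nlinarith)

theorem scalar_equation_of_factorization {f G : ℝ → ℝ} {a b c : ℝ} (ha : 0 < a) (hb : 0 < b)
    (hc : 0 ≤ c) (hf : ∀ x, 0 ≤ x → f x = a / (b * (b + x)) * G (c * x / (b * (b + x))))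
    (hGc : ContinuousOn G (Ici 0)) (hGa : AntitoneOn G (Ici 0)) (hGp : ∀ t, 0 ≤ t → 0 < G t) :
    ContinuousOn f (Ici 0) ∧ StrictAntiOn f (Ici 0) ∧ (1 < f 0 → ∃! x, 0 < x ∧ f x = 1) := by
  have hD : ∀ x ∈ Ici (0 : ℝ), b * (b + x) ≠ 0 := fun x (hx : 0 ≤ x) => by positivity
  have hφ : MapsTo (fun x => c * x / (b * (b + x))) (Ici 0) (Ici 0) := fun x (hx : 0 ≤ x) =>
    show 0 ≤ c * x / (b * (b + x)) by positivity
  have hcont : ContinuousOn f (Ici 0) :=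
    ((continuousOn_const.div (by fun_prop) hD).mul
      (hGc.comp ((continuousOn_const.mul continuousOn_id).div (by fun_prop) hD) hφ)).congr hf
  have hanti : StrictAntiOn f (Ici 0) :=
    ((strictAntiOn_div_mul_add ha hb).mul_antitoneOn_of_nonneg
      (hGa.comp_MonotoneOn (monotoneOn_mul_div_mul_add hb hc) hφ)
      (fun x (hx : 0 ≤ x) => by positivity) fun x hx => hGp _ (hφ hx)).congr
      fun x hx => (hf x hx).symm
  -- at `x₁ = a G(0) / b` the bound `f x₁ ≤ a G(0) / (b (b + x₁))` equals `x₁ / (b + x₁) < 1`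
  have hx₁ : 0 ≤ a * G 0 / b := by have := hGp 0 le_rfl; positivity
  refine ⟨hcont, hanti, fun h1 => hanti.existsUnique_pos_eq hcont h1 hx₁ ?_⟩
  calc f (a * G 0 / b) ≤ a / (b * (b + a * G 0 / b)) * G 0 := by
        rw [hf _ hx₁]
        exact mul_le_mul_of_nonneg_left (hGa self_mem_Ici (hφ hx₁) (hφ hx₁)) (by positivity)
    _ = a * G 0 / b / (b + a * G 0 / b) := by field_simp
    _ < 1 := (div_lt_one (by positivity)).2 (by linarith)

noncomputable def cumulative (g : ℝ → ℝ) (a : ℝ) : ℝ := ∫ u in (0 : ℝ)..a, g u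

section Cumulative

variable {g : ℝ → ℝ}

theorem continuous_cumulative (hg : ∀ a b, IntervalIntegrable g volume a b) :
    Continuous (cumulative g) :=
  intervalIntegral.continuous_primitive hg 0

theorem cumulative_sub_cumulative (hg : ∀ a b, IntervalIntegrable g volume a b) (s u : ℝ) :
    cumulative g u - cumulative g s = ∫ v in s..u, g v :=
  intervalIntegral.integral_interval_sub_left (hg 0 u) (hg 0 s)

theorem mul_sub_le_cumulative_sub {m s u : ℝ} (hg : ∀ a b, IntervalIntegrable g volume a b)
    (hm : ∀ x, m ≤ g x) (hsu : s ≤ u) : m * (u - s) ≤ cumulative g u - cumulative g s := by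
  rw [cumulative_sub_cumulative hg]
  exact mul_sub_le_intervalIntegral hsu (hg s u) hm

theorem mul_le_cumulative {m s : ℝ} (hg : ∀ a b, IntervalIntegrable g volume a b)
    (hm : ∀ x, m ≤ g x) (hs : 0 ≤ s) : m * s ≤ cumulative g s := by
  simpa [cumulative] using mul_sub_le_cumulative_sub hg hm hs

end Cumulative

theorem kernel_le_exp {βh βv W M : ℝ → ℝ} {Bβh Bβv μ0 : ℝ} (hβh0 : ∀ a, 0 ≤ βh a)
    (hβv0 : ∀ a, 0 ≤ βv a) (hβhB : ∀ a, βh a ≤ Bβh) (hβvB : ∀ a, βv a ≤ Bβv)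
    (hM : ∀ s, 0 ≤ s → μ0 * s ≤ M s) (hW : ∀ s u, s ≤ u → μ0 * (u - s) ≤ W u - W s)
    {s u : ℝ} (hs : 0 ≤ s) (hsu : s ≤ u) :
    βh u * exp (-W u) * (βv s * exp (W s - M s)) ≤ Bβh * Bβv * exp (-(μ0 * u)) :=
  calc βh u * exp (-W u) * (βv s * exp (W s - M s))
      = βh u * βv s * exp (-W u + (W s - M s)) := by rw [exp_add]; ring
    _ ≤ Bβh * Bβv * exp (-(μ0 * u)) :=
      mul_le_mul (mul_le_mul (hβhB u) (hβvB s) (hβv0 s) ((hβh0 u).trans (hβhB u)))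
        (exp_le_exp.2 (by linarith [hM s hs, hW s u hsu])) (exp_pos _).le
        (mul_nonneg ((hβh0 u).trans (hβhB u)) ((hβv0 s).trans (hβvB s)))

theorem integral_endemic_eq_nestedLaplace {βh βv μh w k : ℝ → ℝ} {t : ℝ}
    (hβv : ∀ a b, IntervalIntegrable βv volume a b) (hμh : ∀ a b, IntervalIntegrable μh volume a b)
    (hw : ∀ a b, IntervalIntegrable w volume a b) (hk : ∀ ξ, k ξ = t * βv ξ + μh ξ) :
    ∫ a in Ioi 0, βh a *
        ∫ s in 0..a, βv s * exp (-(∫ ξ in 0..s, k ξ)) * exp (-(∫ ξ in s..a, w ξ)) =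
      nestedLaplace (fun u => βh u * exp (-cumulative w u))
        (fun s => βv s * exp (cumulative w s - cumulative μh s)) (cumulative βv) t := by
  refine setIntegral_congr_fun measurableSet_Ioi fun a _ => ?_
  simp only
  rw [← intervalIntegral.integral_const_mul, ← intervalIntegral.integral_const_mul]
  refine intervalIntegral.integral_congr fun s _ => ?_
  have hks : ∫ ξ in 0..s, k ξ = t * cumulative βv s + cumulative μh s := by
    simp only [hk]
    rw [intervalIntegral.integral_add ((hβv 0 s).const_mul t) (hμh 0 s),
      intervalIntegral.integral_const_mul]
    rfl
  have hexp : exp (-(t * cumulative βv s + cumulative μh s)) *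
      exp (-(cumulative w a - cumulative w s)) =
      exp (-cumulative w a) * (exp (cumulative w s - cumulative μh s) *
        exp (-(t * cumulative βv s))) := by
    simp only [← exp_add]; ring_nf
  simp only [hks, ← cumulative_sub_cumulative hw]
  linear_combination (βh a * βv s) * hexp

theorem integral_R0_eq {βh βv μh w sh0 : ℝ → ℝ} {Λh : ℝ}
    (hw : ∀ a b, IntervalIntegrable w volume a b)
    (hsh0 : ∀ a, sh0 a = Λh * exp (-cumulative μh a)) :
    ∫ σ in Ioi 0, ∫ ξ in Ioi 0, βh (ξ + σ) * βv ξ * sh0 ξ * exp (-(∫ u in ξ..(ξ + σ), w u)) =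
      Λh * ∫ σ in Ioi 0, ∫ ξ in Ioi 0, βh (ξ + σ) * exp (-cumulative w (ξ + σ)) *
        (βv ξ * exp (cumulative w ξ - cumulative μh ξ)) := by
  rw [← integral_const_mul]
  refine integral_congr_ae (ae_of_all _ fun σ => ?_)
  dsimp only
  rw [← integral_const_mul]
  refine integral_congr_ae (ae_of_all _ fun ξ => ?_)
  dsimp only
  have hexp : exp (-cumulative μh ξ) * exp (-(cumulative w (ξ + σ) - cumulative w ξ)) =
      exp (-cumulative w (ξ + σ)) * exp (cumulative w ξ - cumulative μh ξ) := by
    simp only [← exp_add]; ring_nf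
  simp only [hsh0, ← cumulative_sub_cumulative hw]
  linear_combination (Λh * βh (ξ + σ) * βv ξ) * hexp

theorem isDecayingKernel_endemic {βh βv μh w : ℝ → ℝ} {μ0 Bβh Bβv : ℝ}
    (hβh : Measurable βh) (hβv : Measurable βv) (hβh0 : ∀ a, 0 ≤ βh a) (hβv0 : ∀ a, 0 ≤ βv a)
    (hβhB : ∀ a, βh a ≤ Bβh) (hβvB : ∀ a, βv a ≤ Bβv)
    (hμh : ∀ a b, IntervalIntegrable μh volume a b) (hw : ∀ a b, IntervalIntegrable w volume a b)
    (hμh_lb : ∀ u, μ0 ≤ μh u) (hw_lb : ∀ u, μ0 ≤ w u) (hμ0 : 0 < μ0) :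
    IsDecayingKernel (fun u => βh u * exp (-cumulative w u))
      (fun s => βv s * exp (cumulative w s - cumulative μh s)) (cumulative βv) (Bβh * Bβv) μ0 :=
  have hβvi := intervalIntegrable_of_le_of_le hβv hβv0 hβvB
  have := continuous_cumulative hw
  have := continuous_cumulative hμh
  { measurable_A := hβh.mul (by fun_prop)
    nonneg_A := fun u => mul_nonneg (hβh0 u) (exp_pos _).le
    measurable_ρ := hβv.mul (by fun_prop)
    nonneg_ρ := fun s => mul_nonneg (hβv0 s) (exp_pos _).le
    intervalIntegrable_ρ := fun a b => (hβvi a b).mul_continuousOn (by fun_prop)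
    continuous_B := continuous_cumulative hβvi
    nonneg_B := fun s hs => by simpa using mul_le_cumulative hβvi hβv0 hs
    pos_c := hμ0
    le_exp := fun s u hs hsu => kernel_le_exp hβh0 hβv0 hβhB hβvB
      (fun s hs => mul_le_cumulative hμh hμh_lb hs)
      (fun s u hsu => mul_sub_le_cumulative_sub hw hw_lb hsu) hs hsu }

theorem integral_quadrant_irreducible_pos {βh βv : ℝ → ℝ} {μ0 Bβh Bβv : ℝ}
    (hβh : Measurable βh) (hβv : Measurable βv) (hβh0 : ∀ a, 0 ≤ βh a) (hβv0 : ∀ a, 0 ≤ βv a)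
    (hβhB : ∀ a, βh a ≤ Bβh) (hβvB : ∀ a, βv a ≤ Bβv) (hμ0 : 0 < μ0)
    (hirr : 0 < ∫ a in Ioi 0, ∫ s in Ioi 0, βh (a + s) * βv a * exp (-μ0 * (a + s))) :
    0 < ∫ p, βh (p.1 + p.2) * βv p.1 * exp (-μ0 * (p.1 + p.2)) ∂quadrant := by
  have hint := integrable_quadrant_shear (F := fun s u => βh u * βv s * exp (-μ0 * u))
    (C := Bβh * Bβv) (by fun_prop) hμ0 fun s u _ _ => by
      rw [abs_of_nonneg (mul_nonneg (mul_nonneg (hβh0 u) (hβv0 s)) (exp_pos _).le), neg_mul]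
      exact mul_le_mul_of_nonneg_right
        (mul_le_mul (hβhB u) (hβvB s) (hβv0 s) ((hβh0 u).trans (hβhB u))) (exp_pos _).le
  rwa [integral_prod _ hint]

theorem nestedLaplace_endemic_pos {βh βv W V B : ℝ → ℝ} {C c μ0 Bβh Bβv t : ℝ}
    (hK : IsDecayingKernel (fun u => βh u * exp (W u)) (fun s => βv s * exp (V s)) B C c)
    (hβh : Measurable βh) (hβv : Measurable βv) (hβh0 : ∀ a, 0 ≤ βh a) (hβv0 : ∀ a, 0 ≤ βv a)
    (hβhB : ∀ a, βh a ≤ Bβh) (hβvB : ∀ a, βv a ≤ Bβv) (hμ0 : 0 < μ0)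
    (hirr : 0 < ∫ a in Ioi 0, ∫ s in Ioi 0, βh (a + s) * βv a * exp (-μ0 * (a + s)))
    (ht : 0 ≤ t) :
    0 < nestedLaplace (fun u => βh u * exp (W u)) (fun s => βv s * exp (V s)) B t :=
  hK.nestedLaplace_pos (H := fun s u => βh u * βv s * exp (-μ0 * u))
    (fun s u => mul_nonneg (mul_nonneg (hβh0 u) (hβv0 s)) (exp_pos _).le)
    (fun _ _ hH => ⟨mul_ne_zero (left_ne_zero_of_mul (left_ne_zero_of_mul hH)) (exp_pos _).ne',
      mul_ne_zero (right_ne_zero_of_mul (left_ne_zero_of_mul hH)) (exp_pos _).ne'⟩)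
    (integral_quadrant_irreducible_pos hβh hβv hβh0 hβv0 hβhB hβvB hμ0 hirr) ht

theorem endemic_scalar_equation_general
    (Λh Λv μv μ0 : ℝ)
    (μh δ r1 βh βv : ℝ → ℝ)
    (hΛh : 0 < Λh) (hΛv : 0 < Λv) (hμv : 0 < μv) (hμ0 : 0 < μ0)
    (hμhm : Measurable μh) (hδm : Measurable δ) (hr1m : Measurable r1)
    (hβhm : Measurable βh) (hβvm : Measurable βv)
    (hμh_lb : ∀ a, μ0 ≤ μh a)
    (hδ0 : ∀ a, 0 ≤ δ a) (hr10 : ∀ a, 0 ≤ r1 a)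
    (hβh0 : ∀ a, 0 ≤ βh a) (hβv0 : ∀ a, 0 ≤ βv a)
    (Bμh Bδ Br1 Bβh Bβv : ℝ)
    (hμhB : ∀ a, μh a ≤ Bμh) (hδB : ∀ a, δ a ≤ Bδ) (hr1B : ∀ a, r1 a ≤ Br1)
    (hβhB : ∀ a, βh a ≤ Bβh) (hβvB : ∀ a, βv a ≤ Bβv)
    (hirr : 0 < ∫ a in Ioi (0:ℝ), ∫ s in Ioi (0:ℝ), βh (a+s) * βv a * exp (-μ0 * (a+s)))
    (sh0 : ℝ → ℝ) (hsh0 : ∀ a, sh0 a = Λh * exp (-(∫ u in (0:ℝ)..a, μh u)))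
    (Sv0 : ℝ) (hSv0def : Sv0 = Λv / μv)
    (R0 : ℝ)
    (hR0 : R0 = Real.sqrt ((Sv0 / μv) * ∫ s in Ioi (0:ℝ), ∫ ξ in Ioi (0:ℝ),
      βh (ξ+s) * βv ξ * sh0 ξ * exp (-(∫ u in ξ..(ξ+s), (μh u + r1 u + δ u)))))
    (f : ℝ → ℝ)
    (hf : ∀ x, f x = (Λh * Λv / (μv * (μv + x))) * ∫ a in Ioi (0:ℝ), βh a *
      ∫ s in (0:ℝ)..a, βv s
        * exp (-(∫ ξ in (0:ℝ)..s, (Λv * βv ξ * x / (μv * (μv + x)) + μh ξ)))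
        * exp (-(∫ ξ in s..a, (μh ξ + r1 ξ + δ ξ)))) :
    ContinuousOn f (Ici 0) ∧
    StrictAntiOn f (Ici 0) ∧
    f 0 = R0 ^ 2 ∧
    (1 < R0 → ∃! x : ℝ, 0 < x ∧ f x = 1) := by
  set w : ℝ → ℝ := fun u => μh u + r1 u + δ u
  have hw_lb : ∀ u, μ0 ≤ w u := fun u => by linarith [hμh_lb u, hr10 u, hδ0 u]
  have hμhi := intervalIntegrable_of_le_of_le hμhm hμh_lb hμhB
  have hwi : ∀ a b, IntervalIntegrable w volume a b := intervalIntegrable_of_le_of_le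
    (by fun_prop) hw_lb fun u => add_le_add (add_le_add (hμhB u) (hr1B u)) (hδB u)
  set A : ℝ → ℝ := fun u => βh u * exp (-cumulative w u)
  set ρ : ℝ → ℝ := fun s => βv s * exp (cumulative w s - cumulative μh s)
  have hK : IsDecayingKernel A ρ (cumulative βv) (Bβh * Bβv) μ0 :=
    isDecayingKernel_endemic hβhm hβvm hβh0 hβv0 hβhB hβvB hμhi hwi hμh_lb hw_lb hμ0
  have hGpos : ∀ t, 0 ≤ t → 0 < nestedLaplace A ρ (cumulative βv) t :=
    fun t => nestedLaplace_endemic_pos hK hβhm hβvm hβh0 hβv0 hβhB hβvB hμ0 hirr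
  have hfG : ∀ x, 0 ≤ x → f x = Λh * Λv / (μv * (μv + x)) *
      nestedLaplace A ρ (cumulative βv) (Λv * x / (μv * (μv + x))) := fun x _ => by
    rw [hf x]
    congr 1
    exact integral_endemic_eq_nestedLaplace
      (intervalIntegrable_of_le_of_le hβvm hβv0 hβvB) hμhi hwi fun ξ => by ring
  obtain ⟨hcont, hanti, hroot⟩ := scalar_equation_of_factorization (mul_pos hΛh hΛv) hμv hΛv.le
    hfG hK.continuousOn_nestedLaplace hK.antitoneOn_nestedLaplace hGpos
  have hf0 : f 0 = R0 ^ 2 := by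
    rw [hR0, integral_R0_eq hwi hsh0, ← hK.nestedLaplace_zero_eq_integral_Ioi_integral_Ioi,
      sq_sqrt (by rw [hSv0def]; have := hGpos 0 le_rfl; positivity), hfG 0 le_rfl, hSv0def, mul_zero, zero_div, add_zero]
    field_simp
  exact ⟨hcont, hanti, hf0, fun h => hroot (by rw [hf0]; nlinarith)⟩

/-- The scalar reduction of the endemic steady-state system of the age-structured
SIRS/SI malaria model without reinfection (`r₂ ≡ 0`): the function `f` is continuous
and strictly decreasing, `f(0) = R₀²`, and when `R₀ > 1` the equation `f(x) = 1` has
a unique positive root. -/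
theorem endemic_scalar_equation
    (Λh Λv μv μ0 : ℝ)
    (μh δ r1 βh βv : ℝ → ℝ)
    (hΛh : 0 < Λh) (hΛv : 0 < Λv) (hμv : 0 < μv) (hμ0 : 0 < μ0)
    (hμhm : Measurable μh) (hδm : Measurable δ) (hr1m : Measurable r1)
    (hβhm : Measurable βh) (hβvm : Measurable βv)
    (hμh_lb : ∀ a, μ0 ≤ μh a) (hμv_lb : μ0 ≤ μv)
    (hδ0 : ∀ a, 0 ≤ δ a) (hr10 : ∀ a, 0 ≤ r1 a)
    (hβh0 : ∀ a, 0 ≤ βh a) (hβv0 : ∀ a, 0 ≤ βv a)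
    (Bμh Bδ Br1 Bβh Bβv : ℝ)
    (hμhB : ∀ a, μh a ≤ Bμh) (hδB : ∀ a, δ a ≤ Bδ) (hr1B : ∀ a, r1 a ≤ Br1)
    (hβhB : ∀ a, βh a ≤ Bβh) (hβvB : ∀ a, βv a ≤ Bβv)
    (hirr : 0 < ∫ a in Ioi (0:ℝ), ∫ s in Ioi (0:ℝ), βh (a+s) * βv a * exp (-μ0 * (a+s)))
    (sh0 : ℝ → ℝ) (hsh0 : ∀ a, sh0 a = Λh * exp (-(∫ u in (0:ℝ)..a, μh u)))
    (Sv0 : ℝ) (hSv0def : Sv0 = Λv / μv)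
    (R0 : ℝ)
    (hR0 : R0 = Real.sqrt ((Sv0 / μv) * ∫ s in Ioi (0:ℝ), ∫ ξ in Ioi (0:ℝ),
      βh (ξ+s) * βv ξ * sh0 ξ * exp (-(∫ u in ξ..(ξ+s), (μh u + r1 u + δ u)))))
    (f : ℝ → ℝ)
    (hf : ∀ x, f x = (Λh * Λv / (μv * (μv + x))) * ∫ a in Ioi (0:ℝ), βh a *
      ∫ s in (0:ℝ)..a, βv s
        * exp (-(∫ ξ in (0:ℝ)..s, (Λv * βv ξ * x / (μv * (μv + x)) + μh ξ)))
        * exp (-(∫ ξ in s..a, (μh ξ + r1 ξ + δ ξ)))) :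
    ContinuousOn f (Ici 0) ∧
    StrictAntiOn f (Ici 0) ∧
    f 0 = R0 ^ 2 ∧
    (1 < R0 → ∃! x : ℝ, 0 < x ∧ f x = 1) :=
  endemic_scalar_equation_general Λh Λv μv μ0 μh δ r1 βh βv hΛh hΛv hμv hμ0 hμhm hδm hr1m hβhm hβvm
    hμh_lb hδ0 hr10 hβh0 hβv0 Bμh Bδ Br1 Bβh Bβv hμhB hδB hr1B hβhB hβvB hirr sh0 hsh0 Sv0 hSv0def
    R0 hR0 f hf
end

section
/- Let Λ_h, Λ_v, μ_h, μ_v, δ, r_1, r_2, β_h, β_v be positive real constants, set S_h^0 = Λ_h/μ_h, S_v^0 = Λ_v/μ_v and R_0 = sqrt( (β_h·S_v^0/(μ_h+δ+r_1))·(β_v·S_h^0/μ_v) ). Consider the equilibrium system: Λ_h + r_2·R_h^* = (β_v·I_v^* + μ_h)·S_h^*; β_v·I_v^*·S_h^* = (μ_h+δ+r_1)·I_h^*; r_1·I_h^* = (r_2+μ_h)·R_h^*; Λ_v = β_h·S_v^*·I_h^* + μ_v·S_v^*; β_h·S_v^*·I_h^* = μ_v·I_v^*. Then this system has a solution (S_h^*,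 I_h^*, R_h^*, S_v^*, I_v^*) with all five components positive if and only if R_0 > 1; in that case the positive solution is unique and I_v^* = c·(R_0² − 1) where c = μ_h·μ_v·(μ_h+δ+r_1)·(μ_h+r_2) / ( β_v·μ_v·(μ_h+δ+r_1)·(μ_h+r_2) + Λ_h·β_v·β_h·(μ_h+r_2) − β_v·μ_v·r_1·r_2 ) > 0. -/
/-!
At an equilibrium, `R_h`, `S_v`, `I_v` and `S_h` are rational functions of `I_h` (from the third,
fourth, fifth and second equations). Substituting them into the first equation and cancelling a
factor `I_h` leaves the *linear* equation `hostInfectedCoeff * I_h = (r₂ + μ_h) * thresholdGap`,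
where `hostInfectedCoeff > 0` and `thresholdGap = β_h β_v Λ_h Λ_v − (μ_h + δ + r₁) μ_h μ_v²` is a
positive multiple of `R₀² − 1`. So a positive equilibrium exists iff `R₀ > 1`, and it is then
unique. Eliminating `I_h` instead gives
`vectorInfectedCoeff * μ_v * I_v = (r₂ + μ_h) * thresholdGap`, which is the formula `I_v = c (R₀² − 1)`.
-/

namespace MalariaSIRS

section
variable (Λh Λv μh μv δ r1 r2 βh βv : ℝ)

def IsEquilibrium (Sh Ih Rh Sv Iv : ℝ) : Prop :=
  Λh + r2 * Rh = (βv * Iv + μh) * Sh ∧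
  βv * Iv * Sh = (μh + δ + r1) * Ih ∧
  r1 * Ih = (r2 + μh) * Rh ∧
  Λv = βh * Sv * Ih + μv * Sv ∧
  βh * Sv * Ih = μv * Iv

def IsPositiveEquilibrium (Sh Ih Rh Sv Iv : ℝ) : Prop :=
  (0 < Sh ∧ 0 < Ih ∧ 0 < Rh ∧ 0 < Sv ∧ 0 < Iv) ∧
    IsEquilibrium Λh Λv μh μv δ r1 r2 βh βv Sh Ih Rh Sv Iv

/-- `R₀²`, with `S_h⁰ = Λ_h / μ_h` and `S_v⁰ = Λ_v / μ_v` substituted. -/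
noncomputable def reproductionRatio : ℝ :=
  βh * (Λv / μv) / (μh + δ + r1) * (βv * (Λh / μh) / μv)

def thresholdGap : ℝ := βh * βv * Λh * Λv - (μh + δ + r1) * μh * μv ^ 2

def hostInfectedCoeff : ℝ :=
  βh * (βv * Λv * ((μh + δ + r1) * (r2 + μh) - r1 * r2)
    + (μh + δ + r1) * μh * μv * (r2 + μh))

def vectorInfectedCoeff : ℝ :=
  βv * μv * (μh + δ + r1) * (μh + r2) + Λh * βv * βh * (μh + r2) - βv * μv * r1 * r2

/-- The solution of all equilibrium equations but the first with `I_h = x`. -/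
noncomputable def endemicPoint (x : ℝ) : ℝ × ℝ × ℝ × ℝ × ℝ :=
  ((μh + δ + r1) * μv * (μv + βh * x) / (βv * βh * Λv), x, r1 * x / (r2 + μh),
    Λv / (μv + βh * x), βh * Λv * x / (μv * (μv + βh * x)))

noncomputable def endemicEquilibrium : ℝ × ℝ × ℝ × ℝ × ℝ :=
  endemicPoint Λv μh μv δ r1 r2 βh βv
    ((r2 + μh) * thresholdGap Λh Λv μh μv δ r1 βh βv / hostInfectedCoeff Λv μh μv δ r1 r2 βh βv)

lemma mul_vectorInfectedCoeff :
    βh * Λv * vectorInfectedCoeff Λh μh μv δ r1 r2 βh βv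
      = μv * hostInfectedCoeff Λv μh μv δ r1 r2 βh βv
        + βh * (r2 + μh) * thresholdGap Λh Λv μh μv δ r1 βh βv := by
  unfold vectorInfectedCoeff hostInfectedCoeff thresholdGap
  ring

end

variable {Λh Λv μh μv δ r1 r2 βh βv Sh Ih Rh Sv Iv x : ℝ}

lemma r1_mul_r2_lt (hμh : 0 < μh) (hδ : 0 ≤ δ) (hr1 : 0 ≤ r1) (hr2 : 0 ≤ r2) :
    r1 * r2 < (μh + δ + r1) * (r2 + μh) := by
  nlinarith

lemma hostInfectedCoeff_pos (hΛv : 0 < Λv) (hμh : 0 < μh) (hμv : 0 < μv) (hδ : 0 < δ)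
    (hr1 : 0 < r1) (hr2 : 0 < r2) (hβh : 0 < βh) (hβv : 0 < βv) :
    0 < hostInfectedCoeff Λv μh μv δ r1 r2 βh βv := by
  have : 0 < (μh + δ + r1) * (r2 + μh) - r1 * r2 := by
    linarith [r1_mul_r2_lt hμh hδ.le hr1.le hr2.le]
  unfold hostInfectedCoeff
  positivity

lemma vectorInfectedCoeff_pos (hΛh : 0 < Λh) (hμh : 0 < μh) (hμv : 0 < μv) (hδ : 0 < δ)
    (hr1 : 0 < r1) (hr2 : 0 < r2) (hβh : 0 < βh) (hβv : 0 < βv) :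
    0 < vectorInfectedCoeff Λh μh μv δ r1 r2 βh βv := by
  have : 0 < (μh + δ + r1) * (r2 + μh) - r1 * r2 := by
    linarith [r1_mul_r2_lt hμh hδ.le hr1.le hr2.le]
  have : 0 < βv * μv * ((μh + δ + r1) * (r2 + μh) - r1 * r2) + Λh * βv * βh * (μh + r2) := by
    positivity
  unfold vectorInfectedCoeff
  linarith

lemma reproductionRatio_eq (hμh : μh ≠ 0) (hμv : μv ≠ 0) (hA : μh + δ + r1 ≠ 0) :
    reproductionRatio Λh Λv μh μv δ r1 βh βv
      = 1 + thresholdGap Λh Λv μh μv δ r1 βh βv / ((μh + δ + r1) * μh * μv ^ 2) := by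
  unfold reproductionRatio thresholdGap
  field_simp
  ring

lemma one_lt_sqrt_reproductionRatio_iff (hμh : 0 < μh) (hμv : 0 < μv)
    (hA : 0 < μh + δ + r1) :
    1 < √(reproductionRatio Λh Λv μh μv δ r1 βh βv)
      ↔ 0 < thresholdGap Λh Λv μh μv δ r1 βh βv := by
  rw [Real.lt_sqrt zero_le_one, reproductionRatio_eq hμh.ne' hμv.ne' hA.ne', one_pow,
    lt_add_iff_pos_right, div_pos_iff_of_pos_right (by positivity)]

lemma IsEquilibrium.vectorInfected_mul
    (h : IsEquilibrium Λh Λv μh μv δ r1 r2 βh βv Sh Ih Rh Sv Iv) :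
    μv * Iv * (μv + βh * Ih) = βh * Λv * Ih := by
  obtain ⟨-, -, -, e4, e5⟩ := h
  linear_combination (-(μv + βh * Ih)) * e5 - (βh * Ih) * e4

lemma IsEquilibrium.hostInfectedCoeff_mul
    (h : IsEquilibrium Λh Λv μh μv δ r1 r2 βh βv Sh Ih Rh Sv Iv) (hIh : Ih ≠ 0) :
    hostInfectedCoeff Λv μh μv δ r1 r2 βh βv * Ih
      = (r2 + μh) * thresholdGap Λh Λv μh μv δ r1 βh βv := by
  obtain ⟨e1, e2, e3, e4, e5⟩ := h
  apply mul_left_cancel₀ hIh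
  unfold hostInfectedCoeff thresholdGap
  linear_combination (-((μv + βh * Ih) * μv * βv * Iv * (r2 + μh))) * e1
      - ((μv + βh * Ih) * μv * (βv * Iv * (r2 + μh) + μh * (r2 + μh))) * e2
      - ((μv + βh * Ih) * μv * βv * Iv * r2) * e3
      - (βv * βh * Ih * (Λh * (r2 + μh)
          - ((μh + δ + r1) * (r2 + μh) - r1 * r2) * Ih)) * e4
      - ((μv + βh * Ih) * βv * (Λh * (r2 + μh)
          - ((μh + δ + r1) * (r2 + μh) - r1 * r2) * Ih)) * e5

lemma IsEquilibrium.vectorInfectedCoeff_mul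
    (h : IsEquilibrium Λh Λv μh μv δ r1 r2 βh βv Sh Ih Rh Sv Iv) (hIh : Ih ≠ 0)
    (hΛv : Λv ≠ 0) (hβh : βh ≠ 0) :
    vectorInfectedCoeff Λh μh μv δ r1 r2 βh βv * μv * Iv
      = (r2 + μh) * thresholdGap Λh Λv μh μv δ r1 βh βv := by
  have hhost := h.hostInfectedCoeff_mul hIh
  have hIv := h.vectorInfected_mul
  apply mul_left_cancel₀ (mul_ne_zero hβh hΛv)
  linear_combination hostInfectedCoeff Λv μh μv δ r1 r2 βh βv * hIv
    - (βh * μv * Iv - βh * Λv) * hhost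
    + (μv * Iv) * mul_vectorInfectedCoeff Λh Λv μh μv δ r1 r2 βh βv

lemma IsEquilibrium.eq_endemicPoint
    (h : IsEquilibrium Λh Λv μh μv δ r1 r2 βh βv Sh Ih Rh Sv Iv) (hIh : 0 < Ih)
    (hΛv : Λv ≠ 0) (hμh : 0 < μh) (hμv : 0 < μv) (hr2 : 0 < r2) (hβh : 0 < βh)
    (hβv : βv ≠ 0) :
    (Sh, Ih, Rh, Sv, Iv) = endemicPoint Λv μh μv δ r1 r2 βh βv Ih := by
  have hIv := h.vectorInfected_mul
  obtain ⟨-, e2, e3, e4, -⟩ := h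
  simp only [endemicPoint, Prod.mk.injEq, true_and]
  refine ⟨?_, ?_, ?_, ?_⟩
  · rw [eq_div_iff (mul_ne_zero (mul_ne_zero hβv hβh.ne') hΛv)]
    apply mul_left_cancel₀ hIh.ne'
    linear_combination (μv * (μv + βh * Ih)) * e2 - (Sh * βv) * hIv
  · rw [eq_div_iff (by positivity)]
    linear_combination -e3
  · rw [eq_div_iff (by positivity)]
    linear_combination -e4
  · rw [eq_div_iff (by positivity)]
    linear_combination hIv

lemma endemicPoint_isEquilibrium (hΛv : Λv ≠ 0) (hμv : μv ≠ 0) (hr2μh : r2 + μh ≠ 0)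
    (hβh : βh ≠ 0) (hβv : βv ≠ 0) (hx : μv + βh * x ≠ 0)
    (hhost : hostInfectedCoeff Λv μh μv δ r1 r2 βh βv * x
      = (r2 + μh) * thresholdGap Λh Λv μh μv δ r1 βh βv) :
    let p := endemicPoint Λv μh μv δ r1 r2 βh βv x
    IsEquilibrium Λh Λv μh μv δ r1 r2 βh βv p.1 p.2.1 p.2.2.1 p.2.2.2.1 p.2.2.2.2 := by
  unfold hostInfectedCoeff thresholdGap at hhost
  simp only [endemicPoint]
  have e2 : βv * (βh * Λv * x / (μv * (μv + βh * x)))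
      * ((μh + δ + r1) * μv * (μv + βh * x) / (βv * βh * Λv)) = (μh + δ + r1) * x := by
    field_simp
  refine ⟨?_, e2, ?_, ?_, ?_⟩
  · rw [add_mul, e2]
    field_simp
    linear_combination -hhost
  · field_simp
  · field_simp
    ring
  · field_simp

lemma endemicPoint_pos (hx : 0 < x) (hΛv : 0 < Λv) (hμh : 0 < μh) (hμv : 0 < μv)
    (hδ : 0 < δ) (hr1 : 0 < r1) (hr2 : 0 < r2) (hβh : 0 < βh) (hβv : 0 < βv) :
    let p := endemicPoint Λv μh μv δ r1 r2 βh βv x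
    0 < p.1 ∧ 0 < p.2.1 ∧ 0 < p.2.2.1 ∧ 0 < p.2.2.2.1 ∧ 0 < p.2.2.2.2 := by
  simp only [endemicPoint]
  refine ⟨?_, ?_, ?_, ?_, ?_⟩ <;> positivity

lemma IsPositiveEquilibrium.thresholdGap_pos
    (h : IsPositiveEquilibrium Λh Λv μh μv δ r1 r2 βh βv Sh Ih Rh Sv Iv)
    (hΛv : 0 < Λv) (hμh : 0 < μh) (hμv : 0 < μv) (hδ : 0 < δ) (hr1 : 0 < r1) (hr2 : 0 < r2)
    (hβh : 0 < βh) (hβv : 0 < βv) :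
    0 < thresholdGap Λh Λv μh μv δ r1 βh βv := by
  obtain ⟨⟨-, hIh, -, -, -⟩, h⟩ := h
  have hE := hostInfectedCoeff_pos hΛv hμh hμv hδ hr1 hr2 hβh hβv
  have hBK : 0 < (r2 + μh) * thresholdGap Λh Λv μh μv δ r1 βh βv :=
    h.hostInfectedCoeff_mul hIh.ne' ▸ mul_pos hE hIh
  exact pos_of_mul_pos_right hBK (by positivity)

lemma IsPositiveEquilibrium.eq_endemicEquilibrium
    (h : IsPositiveEquilibrium Λh Λv μh μv δ r1 r2 βh βv Sh Ih Rh Sv Iv)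
    (hΛv : 0 < Λv) (hμh : 0 < μh) (hμv : 0 < μv) (hδ : 0 < δ) (hr1 : 0 < r1) (hr2 : 0 < r2)
    (hβh : 0 < βh) (hβv : 0 < βv) :
    (Sh, Ih, Rh, Sv, Iv) = endemicEquilibrium Λh Λv μh μv δ r1 r2 βh βv := by
  obtain ⟨⟨-, hIh, -, -, -⟩, h⟩ := h
  have hIh_eq : Ih = (r2 + μh) * thresholdGap Λh Λv μh μv δ r1 βh βv
      / hostInfectedCoeff Λv μh μv δ r1 r2 βh βv := by
    rw [eq_div_iff (hostInfectedCoeff_pos hΛv hμh hμv hδ hr1 hr2 hβh hβv).ne', mul_comm]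
    exact h.hostInfectedCoeff_mul hIh.ne'
  rw [endemicEquilibrium, ← hIh_eq]
  exact h.eq_endemicPoint hIh hΛv.ne' hμh hμv hr2 hβh hβv.ne'

lemma endemicEquilibrium_isPositiveEquilibrium
    (hK : 0 < thresholdGap Λh Λv μh μv δ r1 βh βv)
    (hΛv : 0 < Λv) (hμh : 0 < μh) (hμv : 0 < μv) (hδ : 0 < δ) (hr1 : 0 < r1) (hr2 : 0 < r2)
    (hβh : 0 < βh) (hβv : 0 < βv) :
    let p := endemicEquilibrium Λh Λv μh μv δ r1 r2 βh βv
    IsPositiveEquilibrium Λh Λv μh μv δ r1 r2 βh βv p.1 p.2.1 p.2.2.1 p.2.2.2.1 p.2.2.2.2 := by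
  have hE := hostInfectedCoeff_pos hΛv hμh hμv hδ hr1 hr2 hβh hβv
  exact ⟨endemicPoint_pos (by positivity) hΛv hμh hμv hδ hr1 hr2 hβh hβv,
    endemicPoint_isEquilibrium hΛv.ne' hμv.ne' (by positivity) hβh.ne' hβv.ne'
      (by positivity) (mul_div_cancel₀ _ hE.ne')⟩

end MalariaSIRS

open MalariaSIRS

/-- The endemic equilibrium of the SIRS/SI malaria ODE model exists (with all
components positive) if and only if `R₀ > 1`; in that case it is unique and
`I_v* = c(R₀² − 1)` with `c > 0`. -/
theorem ode_endemic_equilibrium_iff_R0_gt_one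
    (Λh Λv μh μv δ r1 r2 βh βv : ℝ)
    (hΛh : 0 < Λh) (hΛv : 0 < Λv) (hμh : 0 < μh) (hμv : 0 < μv)
    (hδ : 0 < δ) (hr1 : 0 < r1) (hr2 : 0 < r2) (hβh : 0 < βh) (hβv : 0 < βv)
    (Sh0 Sv0 R0 c : ℝ)
    (hSh0 : Sh0 = Λh / μh) (hSv0 : Sv0 = Λv / μv)
    (hR0 : R0 = Real.sqrt ((βh * Sv0 / (μh + δ + r1)) * (βv * Sh0 / μv)))
    (hc : c = μh * μv * (μh + δ + r1) * (μh + r2)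
        / (βv * μv * (μh + δ + r1) * (μh + r2) + Λh * βv * βh * (μh + r2)
            - βv * μv * r1 * r2)) :
    ((∃ Sh Ih Rh Sv Iv : ℝ,
        (0 < Sh ∧ 0 < Ih ∧ 0 < Rh ∧ 0 < Sv ∧ 0 < Iv) ∧
        Λh + r2 * Rh = (βv * Iv + μh) * Sh ∧
        βv * Iv * Sh = (μh + δ + r1) * Ih ∧
        r1 * Ih = (r2 + μh) * Rh ∧
        Λv = βh * Sv * Ih + μv * Sv ∧
        βh * Sv * Ih = μv * Iv)
      ↔ 1 < R0) ∧
    (1 < R0 →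
      0 < c ∧
      (∃! q : ℝ × ℝ × ℝ × ℝ × ℝ,
        (0 < q.1 ∧ 0 < q.2.1 ∧ 0 < q.2.2.1 ∧ 0 < q.2.2.2.1 ∧ 0 < q.2.2.2.2) ∧
        Λh + r2 * q.2.2.1 = (βv * q.2.2.2.2 + μh) * q.1 ∧
        βv * q.2.2.2.2 * q.1 = (μh + δ + r1) * q.2.1 ∧
        r1 * q.2.1 = (r2 + μh) * q.2.2.1 ∧
        Λv = βh * q.2.2.2.1 * q.2.1 + μv * q.2.2.2.1 ∧
        βh * q.2.2.2.1 * q.2.1 = μv * q.2.2.2.2) ∧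
      (∀ Sh Ih Rh Sv Iv : ℝ,
        (0 < Sh ∧ 0 < Ih ∧ 0 < Rh ∧ 0 < Sv ∧ 0 < Iv) →
        Λh + r2 * Rh = (βv * Iv + μh) * Sh →
        βv * Iv * Sh = (μh + δ + r1) * Ih →
        r1 * Ih = (r2 + μh) * Rh →
        Λv = βh * Sv * Ih + μv * Sv →
        βh * Sv * Ih = μv * Iv →
        Iv = c * (R0 ^ 2 - 1))) := by
  subst hSh0 hSv0
  have hA : 0 < μh + δ + r1 := by positivity
  have hV := vectorInfectedCoeff_pos hΛh hμh hμv hδ hr1 hr2 hβh hβv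
  replace hc : c = μh * μv * (μh + δ + r1) * (μh + r2)
      / vectorInfectedCoeff Λh μh μv δ r1 r2 βh βv := hc
  have hR0sq : R0 ^ 2 - 1
      = thresholdGap Λh Λv μh μv δ r1 βh βv / ((μh + δ + r1) * μh * μv ^ 2) := by
    rw [hR0, Real.sq_sqrt (by positivity)]
    exact sub_eq_iff_eq_add'.mpr (reproductionRatio_eq hμh.ne' hμv.ne' hA.ne')
  have one_lt_R0_iff : 1 < R0 ↔ 0 < thresholdGap Λh Λv μh μv δ r1 βh βv :=
    hR0 ▸ one_lt_sqrt_reproductionRatio_iff hμh hμv hA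
  refine ⟨⟨fun ⟨_, _, _, _, _, h⟩ ↦ ?_, fun h ↦ ?_⟩, fun h ↦ ⟨?_, ?_, ?_⟩⟩
  · exact one_lt_R0_iff.mpr
      (IsPositiveEquilibrium.thresholdGap_pos h hΛv hμh hμv hδ hr1 hr2 hβh hβv)
  · exact ⟨_, _, _, _, _, endemicEquilibrium_isPositiveEquilibrium (one_lt_R0_iff.mp h)
      hΛv hμh hμv hδ hr1 hr2 hβh hβv⟩
  · rw [hc]
    positivity
  · refine ⟨_, endemicEquilibrium_isPositiveEquilibrium (one_lt_R0_iff.mp h)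
      hΛv hμh hμv hδ hr1 hr2 hβh hβv, ?_⟩
    rintro ⟨Sh, Ih, Rh, Sv, Iv⟩ hq
    exact IsPositiveEquilibrium.eq_endemicEquilibrium hq hΛv hμh hμv hδ hr1 hr2 hβh hβv
  · rintro Sh Ih Rh Sv Iv ⟨-, hIh, -, -, -⟩ e1 e2 e3 e4 e5
    have hIv := IsEquilibrium.vectorInfectedCoeff_mul ⟨e1, e2, e3, e4, e5⟩
      hIh.ne' hΛv.ne' hβh.ne'
    rw [hR0sq, hc, div_mul_div_comm, eq_div_iff (by positivity)]
    linear_combination ((μh + δ + r1) * μh * μv) * hIv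
end

section
/- Let Λ_h, Λ_v, μ_h, μ_v, δ, r_1, β_h, β_v be positive real constants and let S_h^*, I_h^*, R_h^*, S_v^*, I_v^* be positive reals satisfying the equilibrium system with r_2 = 0: Λ_h = (β_v·I_v^* + μ_h)·S_h^*; β_v·I_v^*·S_h^* = (μ_h+δ+r_1)·I_h^*; r_1·I_h^* = μ_h·R_h^*; Λ_v = β_h·S_v^*·I_h^* + μ_v·S_v^*; β_h·S_v^*·I_h^* = μ_v·I_v^*. Define the cubic polynomial p(λ) = (λ + μ_h + δ + r_1)·(λ + μ_v + β_h·I_h^*)·(λ + μ_h + β_v·I_v^*) − β_h·β_v·S_h^*·S_v^*·(λ + μ_h). Then every complex root λ of p satisfies Re(λ) < 0. -/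
/-! At the endemic equilibrium the two infection balances give `βh βv Sh Sv = (μh + δ + r1) μv`,
so a root `λ` of the cubic satisfies
`(λ + μh + δ + r1)(λ + μv + βh Ih)(λ + μh + βv Iv) = (μh + δ + r1) μv (λ + μh)`.
If `Re λ ≥ 0`, then adding a larger nonnegative real to `λ` gives a larger modulus, so the modulus
of the left side strictly exceeds that of the right side. -/

namespace Complex

lemma le_norm_add_ofReal {z : ℂ} {t : ℝ} (hz : 0 ≤ z.re) : t ≤ ‖z + t‖ :=
  calc t ≤ (z + t).re := by simp only [add_re, ofReal_re]; linarith
    _ ≤ ‖z + t‖ := re_le_norm _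

lemma norm_add_ofReal_lt_norm_add_ofReal {z : ℂ} {s t : ℝ} (hz : 0 ≤ z.re) (hs : 0 ≤ s)
    (hst : s < t) : ‖z + s‖ < ‖z + t‖ := by
  have hsq : ‖z + s‖ ^ 2 < ‖z + t‖ ^ 2 := by
    simp only [Complex.sq_norm, normSq_apply, add_re, add_im, ofReal_re, ofReal_im]
    nlinarith
  exact lt_of_pow_lt_pow_left₀ 2 (norm_nonneg _) hsq

lemma re_neg_of_cubic_eq {a b c m μ : ℝ} (ha : 0 < a) (hm : 0 < m) (hmb : m ≤ b)
    (hμ : 0 ≤ μ) (hμc : μ < c) {z : ℂ}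
    (hz : (z + a) * (z + b) * (z + c) - ((a * m : ℝ) : ℂ) * (z + μ) = 0) : z.re < 0 := by
  by_contra! hre
  have hnorm : ‖z + a‖ * ‖z + b‖ * ‖z + c‖ = a * m * ‖z + μ‖ := by
    have := congrArg (‖·‖) (sub_eq_zero.mp hz)
    simpa only [norm_mul, norm_real, Real.norm_eq_abs, abs_of_pos ha, abs_of_pos hm] using this
  have hc : ‖z + μ‖ < ‖z + c‖ := norm_add_ofReal_lt_norm_add_ofReal hre hμ hμc
  have hab : a * m ≤ ‖z + a‖ * ‖z + b‖ :=
    mul_le_mul (le_norm_add_ofReal hre) (hmb.trans (le_norm_add_ofReal hre)) hm.le (norm_nonneg _)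
  have hlt : a * m * ‖z + μ‖ < ‖z + a‖ * ‖z + b‖ * ‖z + c‖ :=
    calc a * m * ‖z + μ‖ < a * m * ‖z + c‖ := mul_lt_mul_of_pos_left hc (mul_pos ha hm)
      _ ≤ ‖z + a‖ * ‖z + b‖ * ‖z + c‖ := mul_le_mul_of_nonneg_right hab (norm_nonneg _)
  exact hlt.ne' hnorm

end Complex

lemma transmission_product_eq_of_balance {βh βv Sh Sv Ih Iv γ μv : ℝ} (hIh : Ih ≠ 0)
    (hIv : Iv ≠ 0) (hhost : βv * Iv * Sh = γ * Ih) (hvector : βh * Sv * Ih = μv * Iv) :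
    βh * βv * Sh * Sv = γ * μv := by
  apply mul_right_cancel₀ (mul_ne_zero hIh hIv)
  linear_combination (βv * Iv * Sh) * hvector + (μv * Iv) * hhost

theorem endemic_equilibrium_characteristic_roots_negative_general
    (μh μv δ r1 βh βv : ℝ)
    (hμh : 0 < μh) (hμv : 0 < μv)
    (hδ : 0 < δ) (hr1 : 0 < r1) (hβh : 0 < βh) (hβv : 0 < βv)
    (Sh Ih Sv Iv : ℝ)
    (hIh : 0 < Ih) (hIv : 0 < Iv)
    (heq2 : βv * Iv * Sh = (μh + δ + r1) * Ih)
    (heq5 : βh * Sv * Ih = μv * Iv) :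
    ∀ lam : ℂ,
      (lam + ((μh + δ + r1 : ℝ) : ℂ)) * (lam + ((μv + βh * Ih : ℝ) : ℂ))
          * (lam + ((μh + βv * Iv : ℝ) : ℂ))
        - ((βh * βv * Sh * Sv : ℝ) : ℂ) * (lam + ((μh : ℝ) : ℂ)) = 0 →
      lam.re < 0 := by
  intro lam hroot
  rw [transmission_product_eq_of_balance hIh.ne' hIv.ne' heq2 heq5] at hroot
  exact Complex.re_neg_of_cubic_eq (by positivity) hμv (by nlinarith) hμh.le (by nlinarith) hroot

/-- Routh–Hurwitz stability of the endemic equilibrium of the SIRS/SI malaria ODE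
model with `r₂ = 0`: every complex root of the characteristic cubic at the endemic
equilibrium has negative real part. -/
theorem endemic_equilibrium_characteristic_roots_negative
    (Λh Λv μh μv δ r1 βh βv : ℝ)
    (hΛh : 0 < Λh) (hΛv : 0 < Λv) (hμh : 0 < μh) (hμv : 0 < μv)
    (hδ : 0 < δ) (hr1 : 0 < r1) (hβh : 0 < βh) (hβv : 0 < βv)
    (Sh Ih Rh Sv Iv : ℝ)
    (hSh : 0 < Sh) (hIh : 0 < Ih) (hRh : 0 < Rh) (hSv : 0 < Sv) (hIv : 0 < Iv)
    (heq1 : Λh = (βv * Iv + μh) * Sh)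
    (heq2 : βv * Iv * Sh = (μh + δ + r1) * Ih)
    (heq3 : r1 * Ih = μh * Rh)
    (heq4 : Λv = βh * Sv * Ih + μv * Sv)
    (heq5 : βh * Sv * Ih = μv * Iv) :
    ∀ lam : ℂ,
      (lam + ((μh + δ + r1 : ℝ) : ℂ)) * (lam + ((μv + βh * Ih : ℝ) : ℂ))
          * (lam + ((μh + βv * Iv : ℝ) : ℂ))
        - ((βh * βv * Sh * Sv : ℝ) : ℂ) * (lam + ((μh : ℝ) : ℂ)) = 0 →
      lam.re < 0 :=
  endemic_equilibrium_characteristic_roots_negative_general μh μv δ r1 βh βv hμh hμv hδ hr1 hβh hβv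
    Sh Ih Sv Iv hIh hIv heq2 heq5
end
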